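/- arXiv:1912.03140 — 2 statements merged into one kernel-verified Lean document; each statement's English description precedes it below -/
import Mathlib

section
/- Let A_d, B_d, K_d, P, Q_d be real matrices with P symmetric positive definite and Q_d symmetric positive definite, satisfying the discrete-time Lyapunov equation (A_d + B_dK_d)ᵀP(A_d + B_dK_d) − P + Q_d = 0. Set Ã := A_d + B_dK_d. Then (Ã − I)ᵀP + P(Ã − I) ⪯ −Q_d in the Loewner order. -/
/-!
Eliminating `Q_d` with the discrete Lyapunov equation turns the gap
`-Q_d - ((Ã - I)ᵀP + P(Ã - I))` into the congruence `(Ã - I)ᵀ P (Ã - I)` of `P`,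
which is positive semidefinite.
-/

open Matrix

namespace Matrix

variable {n : Type*} [Fintype n]

theorem neg_sub_transpose_mul_add_mul_sub_one_eq [DecidableEq n] {R : Type*} [Ring R]
    {A P Q : Matrix n n R} (hLyap : Aᵀ * P * A - P + Q = 0) :
    -Q - ((A - 1)ᵀ * P + P * (A - 1)) = (A - 1)ᵀ * P * (A - 1) := by
  have hQ : Q = P - Aᵀ * P * A := by
    linear_combination (norm := noncomm_ring) hLyap
  rw [hQ, transpose_sub, transpose_one]
  noncomm_ring

theorem PosSemidef.transpose_mul_mul_same {m : Type*} [Fintype m] {P : Matrix n n ℝ}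
    (hP : P.PosSemidef) (B : Matrix n m ℝ) : (Bᵀ * P * B).PosSemidef := by
  simpa only [conjTranspose_eq_transpose_of_trivial] using hP.conjTranspose_mul_mul_same B

end Matrix

theorem discrete_to_continuous_lyapunov_general (n m : ℕ)
    (Ad : Matrix (Fin n) (Fin n) ℝ) (Bd : Matrix (Fin n) (Fin m) ℝ)
    (Kd : Matrix (Fin m) (Fin n) ℝ) (P Qd : Matrix (Fin n) (Fin n) ℝ)
    (hP : P.PosDef)
    (hLyap : (Ad + Bd * Kd)ᵀ * P * (Ad + Bd * Kd) - P + Qd = 0) :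
    ((-Qd) - (((Ad + Bd * Kd) - 1)ᵀ * P + P * ((Ad + Bd * Kd) - 1))).PosSemidef := by
  rw [neg_sub_transpose_mul_add_mul_sub_one_eq hLyap]
  exact hP.posSemidef.transpose_mul_mul_same _

theorem discrete_to_continuous_lyapunov (n m : ℕ)
    (Ad : Matrix (Fin n) (Fin n) ℝ) (Bd : Matrix (Fin n) (Fin m) ℝ)
    (Kd : Matrix (Fin m) (Fin n) ℝ) (P Qd : Matrix (Fin n) (Fin n) ℝ)
    (hP : P.PosDef) (hQ : Qd.PosDef)
    (hLyap : (Ad + Bd * Kd)ᵀ * P * (Ad + Bd * Kd) - P + Qd = 0) :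
    ((-Qd) - (((Ad + Bd * Kd) - 1)ᵀ * P + P * ((Ad + Bd * Kd) - 1))).PosSemidef :=
  discrete_to_continuous_lyapunov_general n m Ad Bd Kd P Qd hP hLyap
end

section
/- Let ā, μ, γ̂ > 0 and 0 < κ̂ < 1, σ, θ ≥ 0, and for T > 0 define the matrix A(T) = [[√(1 − Tā), √(Tμ)], [Tγ̂, κ̂(1 + Tσθ)]]. Then there exists T₀ > 0 such that for all 0 < T < T₀, both eigenvalues of A(T) have modulus strictly less than 1. -/
/-!
The eigenvalues are the roots of `λ² - tλ + d` with `t = tr A(T)`, `d = det A(T)`, and by the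
Schur–Cohn–Jury test both lie in the open unit disc as soon as `d < 1` and `|t| < 1 + d`.
At `T = 0` we get `d = κ̂ < 1` and `1 + t + d = 2(1 + κ̂) > 0`, so these hold for small `T` by
continuity. The remaining condition `1 - t + d = (1 - √(1 - Tā))(1 - κ) - Tγ̂√(Tμ) > 0`
degenerates at `T = 0`; it holds because `1 - √(1 - Tā) ≥ Tā/2` is of order `T` while the
off-diagonal product is of order `T^{3/2}`.
-/

open Filter Topology Matrix

theorem abs_lt_one_of_sq_sub_mul_add_eq_zero {t d x : ℝ} (ht : |t| < 1 + d) (hd : d < 1)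
    (hx : x ^ 2 - t * x + d = 0) : |x| < 1 := by
  obtain ⟨htl, htr⟩ := abs_lt.mp ht
  refine abs_lt.mpr ⟨?_, ?_⟩
  · by_contra! hx1
    -- `x² - tx + d = (1 + t + d) + (x + 1)(x - 1 + t)`, and both factors are `≤ 0`
    nlinarith [mul_nonneg_of_nonpos_of_nonpos (by linarith : x + 1 ≤ 0)
      (by linarith : x - 1 + t ≤ 0)]
  · by_contra! hx1
    -- `x² - tx + d = (1 - t + d) + (x - 1)(x + 1 - t)`, and both factors are `≥ 0`
    nlinarith [mul_nonneg (by linarith : 0 ≤ x - 1) (by linarith : 0 ≤ x + 1 - t)]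

/-- The Schur–Cohn–Jury stability test for a monic real quadratic. -/
theorem Complex.norm_lt_one_of_sq_sub_mul_add_eq_zero {t d : ℝ} (ht : |t| < 1 + d)
    (hd : d < 1) {z : ℂ} (hz : z ^ 2 - t * z + d = 0) : ‖z‖ < 1 := by
  have hre : z.re ^ 2 - z.im ^ 2 - t * z.re + d = 0 := by
    simpa [pow_two] using congrArg Complex.re hz
  have him : z.im * (2 * z.re - t) = 0 := by
    have h := congrArg Complex.im hz
    simp only [pow_two, Complex.sub_im, Complex.add_im, Complex.mul_im, Complex.ofReal_re,
      Complex.ofReal_im, Complex.zero_im] at h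
    linear_combination h
  rcases mul_eq_zero.mp him with hy | hx
  · rw [← Complex.re_add_im z, hy, Complex.ofReal_zero, zero_mul, add_zero, Complex.norm_real,
      Real.norm_eq_abs]
    exact abs_lt_one_of_sq_sub_mul_add_eq_zero ht hd (by simpa [hy] using hre)
  · -- a non-real root comes with its conjugate, and `d` is their product `‖z‖²`
    have hnorm : ‖z‖ ^ 2 = d := by
      rw [Complex.sq_norm, Complex.normSq_apply]
      linear_combination -hre + z.re * hx
    exact (pow_lt_one_iff_of_nonneg (norm_nonneg z) two_ne_zero).mp (hnorm ▸ hd)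

theorem Real.sqrt_one_sub_le {x : ℝ} (hx : x ≤ 2) : √(1 - x) ≤ 1 - x / 2 :=
  Real.sqrt_le_iff.mpr ⟨by linarith, by nlinarith [sq_nonneg x]⟩

section AuxMatrix

variable (a μ γ κ σ θ : ℝ)

noncomputable def auxMatrix (T : ℝ) : Matrix (Fin 2) (Fin 2) ℝ :=
  !![√(1 - T * a), √(T * μ); T * γ, κ * (1 + T * σ * θ)]

theorem auxMatrix_trace (T : ℝ) :
    (auxMatrix a μ γ κ σ θ T).trace = √(1 - T * a) + κ * (1 + T * σ * θ) :=
  trace_fin_two_of _ _ _ _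

theorem auxMatrix_det (T : ℝ) :
    (auxMatrix a μ γ κ σ θ T).det = √(1 - T * a) * (κ * (1 + T * σ * θ)) - √(T * μ) * (T * γ) :=
  det_fin_two_of _ _ _ _

theorem tendsto_auxMatrix_trace :
    Tendsto (fun T ↦ (auxMatrix a μ γ κ σ θ T).trace) (𝓝 0) (𝓝 (1 + κ)) := by
  simp_rw [auxMatrix_trace]
  have hc : Continuous fun T : ℝ ↦ √(1 - T * a) + κ * (1 + T * σ * θ) := by fun_prop
  simpa using hc.tendsto 0

theorem tendsto_auxMatrix_det :
    Tendsto (fun T ↦ (auxMatrix a μ γ κ σ θ T).det) (𝓝 0) (𝓝 κ) := by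
  simp_rw [auxMatrix_det]
  have hc : Continuous fun T : ℝ ↦
      √(1 - T * a) * (κ * (1 + T * σ * θ)) - √(T * μ) * (T * γ) := by fun_prop
  simpa using hc.tendsto 0

variable {a κ}

theorem eventually_one_sub_trace_add_det_pos (ha : 0 < a) (hκ : κ < 1) :
    ∀ᶠ T in 𝓝[>] 0,
      0 < 1 - (auxMatrix a μ γ κ σ θ T).trace + (auxMatrix a μ γ κ σ θ T).det := by
  set k : ℝ → ℝ := fun T ↦ κ * (1 + T * σ * θ)
  have hk : Tendsto k (𝓝 0) (𝓝 κ) := by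
    simpa [k] using ((by fun_prop : Continuous k).tendsto 0)
  have hoff : Tendsto (fun T ↦ a * (1 - k T) / 2 - γ * √(T * μ)) (𝓝 0)
      (𝓝 (a * (1 - κ) / 2)) := by
    have hsqrt : Tendsto (fun T : ℝ ↦ √(T * μ)) (𝓝 0) (𝓝 0) := by
      simpa using ((by fun_prop : Continuous fun T : ℝ ↦ √(T * μ)).tendsto 0)
    simpa using ((hk.const_sub 1).const_mul a).div_const 2 |>.sub (hsqrt.const_mul γ)
  have hTa : ∀ᶠ T in 𝓝 (0 : ℝ), T * a < 2 :=
    ((continuous_mul_const a).tendsto' 0 0 (zero_mul a)).eventually_lt_const two_pos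
  filter_upwards [eventually_mem_nhdsWithin,
    nhdsWithin_le_nhds (hk.eventually_lt_const hκ),
    nhdsWithin_le_nhds (hoff.eventually_const_lt (u := 0) (by nlinarith)),
    nhdsWithin_le_nhds hTa] with T (hT : 0 < T) hkT hoffT hTaT
  have hs : T * a / 2 ≤ 1 - √(1 - T * a) := by
    linarith [Real.sqrt_one_sub_le hTaT.le]
  rw [auxMatrix_trace, auxMatrix_det]
  -- the gap `(1 - √(1 - Ta))(1 - k)` is at least `T · a(1 - k)/2`, which beats `T · γ√(Tμ)`
  nlinarith [mul_le_mul_of_nonneg_right hs (by linarith : 0 ≤ 1 - k T), mul_pos hT hoffT]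

theorem eventually_det_lt_one_and_abs_trace_lt (ha : 0 < a) (hκ0 : 0 < κ) (hκ1 : κ < 1) :
    ∀ᶠ T in 𝓝[>] 0, (auxMatrix a μ γ κ σ θ T).det < 1 ∧
      |(auxMatrix a μ γ κ σ θ T).trace| < 1 + (auxMatrix a μ γ κ σ θ T).det := by
  have hsum : Tendsto (fun T ↦ 1 + (auxMatrix a μ γ κ σ θ T).trace +
      (auxMatrix a μ γ κ σ θ T).det) (𝓝 0) (𝓝 (1 + (1 + κ) + κ)) :=
    ((tendsto_auxMatrix_trace a μ γ κ σ θ).const_add 1).add (tendsto_auxMatrix_det a μ γ κ σ θ)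
  filter_upwards [nhdsWithin_le_nhds ((tendsto_auxMatrix_det a μ γ κ σ θ).eventually_lt_const hκ1),
    nhdsWithin_le_nhds (hsum.eventually_const_lt (by linarith)),
    eventually_one_sub_trace_add_det_pos μ γ σ θ ha hκ1] with T hdet hplus hminus
  exact ⟨hdet, abs_lt.mpr ⟨by linarith, by linarith⟩⟩

end AuxMatrix

theorem aux_matrix_eigenvalues_small_general (a μ γ κ σ θ : ℝ)
    (ha : 0 < a) (hκ0 : 0 < κ) (hκ1 : κ < 1) :
    ∃ T₀ > 0, ∀ T : ℝ, 0 < T → T < T₀ →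
      ∀ lam : ℂ,
        lam ^ 2
            - ((Matrix.trace
                (!![Real.sqrt (1 - T * a), Real.sqrt (T * μ);
                    T * γ, κ * (1 + T * σ * θ)]) : ℝ) : ℂ) * lam
            + (((!![Real.sqrt (1 - T * a), Real.sqrt (T * μ);
                    T * γ, κ * (1 + T * σ * θ)]).det : ℝ) : ℂ) = 0 →
          ‖lam‖ < 1 := by
  obtain ⟨T₀, hT₀, hstable⟩ := (nhdsGT_basis (0 : ℝ)).eventually_iff.mp
    (eventually_det_lt_one_and_abs_trace_lt μ γ σ θ ha hκ0 hκ1)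
  refine ⟨T₀, hT₀, fun T hT hTT₀ lam hlam ↦ ?_⟩
  obtain ⟨hdet, htrace⟩ := hstable ⟨hT, hTT₀⟩
  exact Complex.norm_lt_one_of_sq_sub_mul_add_eq_zero htrace hdet hlam

theorem aux_matrix_eigenvalues_small (a μ γ κ σ θ : ℝ)
    (ha : 0 < a) (hμ : 0 < μ) (hγ : 0 < γ) (hκ0 : 0 < κ) (hκ1 : κ < 1)
    (hσ : 0 ≤ σ) (hθ : 0 ≤ θ) :
    ∃ T₀ > 0, ∀ T : ℝ, 0 < T → T < T₀ →
      ∀ lam : ℂ,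
        lam ^ 2
            - ((Matrix.trace
                (!![Real.sqrt (1 - T * a), Real.sqrt (T * μ);
                    T * γ, κ * (1 + T * σ * θ)]) : ℝ) : ℂ) * lam
            + (((!![Real.sqrt (1 - T * a), Real.sqrt (T * μ);
                    T * γ, κ * (1 + T * σ * θ)]).det : ℝ) : ℂ) = 0 →
          ‖lam‖ < 1 :=
  aux_matrix_eigenvalues_small_general a μ γ κ σ θ ha hκ0 hκ1
end
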